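/- arXiv:1210.3391 — 6 statements merged into one kernel-verified Lean document; each statement's English description precedes it below -/
import Mathlib

section
/- For any 0<s<1 and Hölder potential A on B=M^ℕ, the operator T_{s,A}(u)(x) = log(∫_M e^{A(ax)+s·u(ax)} dν(a)) is a contraction with Lipschitz constant s on the space of continuous functions on B with the supremum norm. -/
open MeasureTheory Filter Topology

noncomputable section

/-- Concatenation `ax` of a symbol `a ∈ M` with a sequence `x ∈ M^ℕ`. -/
def pcons {M : Type*} (a : M) (x : ℕ → M) : ℕ → M
  | 0 => a
  | n + 1 => x n

/-- The left shift on `M^ℕ`. -/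
def shiftMap {M : Type*} (x : ℕ → M) : ℕ → M := fun n => x (n + 1)

/-- The metric `d(x,y) = ∑_{n ≥ 1} 2^{-n} d_M(x_n, y_n)` on `M^ℕ`
(coordinates indexed from 0, so coordinate `n` has weight `2^{-(n+1)}`). -/
def dB {M : Type*} [MetricSpace M] (x y : ℕ → M) : ℝ :=
  ∑' n : ℕ, (1 / 2 : ℝ) ^ (n + 1) * dist (x n) (y n)

/-- `f : M^ℕ → ℝ` is `α`-Hölder with constant `C` (w.r.t. the metric `dB`). -/
def HolderFWith {M : Type*} [MetricSpace M] (C α : ℝ) (f : (ℕ → M) → ℝ) : Prop :=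
  Continuous f ∧ ∀ x y, |f x - f y| ≤ C * dB x y ^ α

/-- `f : M^ℕ → ℝ` is `α`-Hölder continuous. -/
def HolderF {M : Type*} [MetricSpace M] (α : ℝ) (f : (ℕ → M) → ℝ) : Prop :=
  ∃ C, 0 ≤ C ∧ HolderFWith C α f

/-- The Ruelle (transfer) operator with a-priori measure `ν` and potential `A`:
`L_A(φ)(x) = ∫_M e^{A(ax)} φ(ax) dν(a)`. -/
def Ruelle {M : Type*} [MetricSpace M] [MeasurableSpace M] (ν : Measure M)
    (A : (ℕ → M) → ℝ) (φ : (ℕ → M) → ℝ) : (ℕ → M) → ℝ :=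
  fun x => ∫ a, Real.exp (A (pcons a x)) * φ (pcons a x) ∂ν

/-- `T_{s,A}(u)(x) = log ∫ e^{A(ax) + s u(ax)} dν(a)` is a contraction
with Lipschitz constant `s` on continuous functions with the sup norm. -/
theorem Tsa_contraction {M : Type*} [MetricSpace M] [CompactSpace M] [Nonempty M]
    [MeasurableSpace M] [BorelSpace M]
    (ν : Measure M) [IsProbabilityMeasure ν]
    (hsupp : ∀ U : Set M, IsOpen U → U.Nonempty → 0 < ν U)
    {α : ℝ} (hα : 0 < α)
    (A : (ℕ → M) → ℝ) (hA : HolderF α A)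
    {s : ℝ} (hs0 : 0 < s) (hs1 : s < 1)
    (u v : (ℕ → M) → ℝ) (hu : Continuous u) (hv : Continuous v) :
    ∀ x : ℕ → M,
      |Real.log (∫ a, Real.exp (A (pcons a x) + s * u (pcons a x)) ∂ν) -
        Real.log (∫ a, Real.exp (A (pcons a x) + s * v (pcons a x)) ∂ν)|
        ≤ s * ⨆ z : ℕ → M, |u z - v z| := by
  obtain ⟨C, -, hAc, -⟩ := hA
  have hpc : ∀ x : ℕ → M, Continuous fun a : M => pcons a x := by
    intro x
    apply continuous_pi
    intro n
    cases n with
    | zero => exact continuous_id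
    | succ n => exact continuous_const
  intro x
  set K := ⨆ z : ℕ → M, |u z - v z| with hK
  have hbdd : BddAbove (Set.range fun z : ℕ → M => |u z - v z|) :=
    (isCompact_range ((hu.sub hv).abs)).bddAbove
  have hKle : ∀ w, |u w - v w| ≤ K := fun w => le_ciSup hbdd w
  have hK0 : 0 ≤ K := le_trans (abs_nonneg _) (hKle (Classical.arbitrary _))
  have hint : ∀ w : (ℕ → M) → ℝ, Continuous w →
      Integrable (fun a => Real.exp (A (pcons a x) + s * w (pcons a x))) ν := by
    intro w hw
    exact (Real.continuous_exp.comp ((hAc.comp (hpc x)).add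
      (continuous_const.mul (hw.comp (hpc x))))).integrable_of_hasCompactSupport
      (HasCompactSupport.of_compactSpace _)
  have key : ∀ (w₁ w₂ : (ℕ → M) → ℝ), Continuous w₁ → Continuous w₂ →
      (∀ z, w₁ z - w₂ z ≤ K) →
      Real.log (∫ a, Real.exp (A (pcons a x) + s * w₁ (pcons a x)) ∂ν) -
        Real.log (∫ a, Real.exp (A (pcons a x) + s * w₂ (pcons a x)) ∂ν) ≤ s * K := by
    intro w₁ w₂ h₁ h₂ hle
    have hmono : (∫ a, Real.exp (A (pcons a x) + s * w₁ (pcons a x)) ∂ν) ≤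
        Real.exp (s * K) * ∫ a, Real.exp (A (pcons a x) + s * w₂ (pcons a x)) ∂ν := by
      rw [← integral_const_mul]
      refine integral_mono (hint w₁ h₁) ((hint w₂ h₂).const_mul _) fun a => ?_
      rw [← Real.exp_add]
      apply Real.exp_le_exp.mpr
      have := hle (pcons a x)
      nlinarith
    have := Real.log_le_log (integral_exp_pos (hint w₁ h₁)) hmono
    rw [Real.log_mul (Real.exp_ne_zero _) (ne_of_gt (integral_exp_pos (hint w₂ h₂))),
      Real.log_exp] at this
    linarith
  rw [abs_sub_le_iff]
  constructor
  · exact key u v hu hv fun z => le_trans (le_abs_self _) (hKle z)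
  · exact key v u hv hu fun z => (le_abs_self _).trans ((abs_sub_comm (v z) (u z)) ▸ hKle z)
end
end

section
/- For any Hölder continuous potential A: M^ℕ → ℝ there exists a strictly positive Hölder continuous function ψ_A and a real λ_A > 0 such that ∫_M e^{A(ax)} ψ_A(ax) dν(a) = λ_A ψ_A(x) for all x ∈ M^ℕ. -/
open MeasureTheory Filter Topology BoundedContinuousFunction

set_option maxHeartbeats 1000000

noncomputable section

section DBlem
variable {M : Type*} [MetricSpace M]

lemma half_pow_summable : Summable (fun n : ℕ => (1 / 2 : ℝ) ^ (n + 1)) :=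
  summable_geometric_two.comp_injective (add_left_injective 1)

lemma dB_summable {D : ℝ} (hD : ∀ p q : M, dist p q ≤ D) (x y : ℕ → M) :
    Summable (fun n : ℕ => (1 / 2 : ℝ) ^ (n + 1) * dist (x n) (y n)) := by
  refine Summable.of_nonneg_of_le (fun n => by positivity) (fun n => ?_)
    (half_pow_summable.mul_left (max D 0))
  rw [mul_comm (max D 0)]
  exact mul_le_mul_of_nonneg_left (le_max_of_le_left (hD _ _)) (by positivity)

lemma dB_nonneg (x y : ℕ → M) : 0 ≤ dB x y :=
  tsum_nonneg fun n => by positivity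

lemma tsum_halves : ∑' n : ℕ, (1 / 2 : ℝ) ^ (n + 1) = 1 := by
  have h : ∀ n : ℕ, (1 / 2 : ℝ) ^ (n + 1) = 1 / 2 / 2 ^ n := by
    intro n; rw [pow_succ, div_pow, one_pow]; ring
  rw [tsum_congr h, tsum_geometric_two' 1]

lemma dB_le_D {D : ℝ} (hD : ∀ p q : M, dist p q ≤ D) (hD0 : 0 ≤ D) (x y : ℕ → M) :
    dB x y ≤ D := by
  have h1 : dB x y ≤ ∑' n : ℕ, (1 / 2 : ℝ) ^ (n + 1) * D := by
    apply Summable.tsum_le_tsum _ (dB_summable hD x y) (half_pow_summable.mul_right _)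
    intro n
    exact mul_le_mul_of_nonneg_left (hD _ _) (by positivity)
  calc dB x y ≤ ∑' n : ℕ, (1 / 2 : ℝ) ^ (n + 1) * D := h1
    _ = 1 * D := by rw [tsum_mul_right, tsum_halves]
    _ = D := one_mul D

lemma dB_pcons {D : ℝ} (hD : ∀ p q : M, dist p q ≤ D) (a : M) (x y : ℕ → M) :
    dB (pcons a x) (pcons a y) = dB x y / 2 := by
  have hs := dB_summable hD (pcons a x) (pcons a y)
  unfold dB
  rw [Summable.tsum_eq_zero_add hs]
  simp only [pcons, dist_self, mul_zero, zero_add]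
  rw [eq_div_iff (two_ne_zero (α := ℝ)), ← tsum_mul_right]
  exact tsum_congr fun n => by ring

lemma tsum_head_tail {g : ℕ → ℝ} {c ε : ℝ} (hc : 0 ≤ c) (hε : 0 < ε) (N : ℕ)
    (hg0 : ∀ n, 0 ≤ g n) (hgc : ∀ n, g n ≤ (1 / 2 : ℝ) ^ (n + 1) * c)
    (hgh : ∀ n < N, g n ≤ (1 / 2 : ℝ) ^ (n + 1) * (ε / 2))
    (hNc : c * (1 / 2 : ℝ) ^ N < ε / 2) :
    ∑' n, g n < ε := by
  have hsum : Summable g :=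
    Summable.of_nonneg_of_le hg0 hgc (half_pow_summable.mul_right c)
  have hsplit := Summable.sum_add_tsum_nat_add (f := g) N hsum
  have htail : ∑' n, g (n + N) ≤ c * (1 / 2 : ℝ) ^ N := by
    calc ∑' n, g (n + N) ≤ ∑' n : ℕ, (c * (1/2:ℝ)^N) * (1/2:ℝ)^(n+1) := by
          apply Summable.tsum_le_tsum _ ((summable_nat_add_iff (f := g) N).2 hsum)
            (half_pow_summable.mul_left _)
          intro n
          calc g (n + N) ≤ (1/2:ℝ)^(n + N + 1) * c := hgc (n + N)
            _ = (c * (1/2:ℝ)^N) * (1/2:ℝ)^(n+1) := by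
              rw [show n + N + 1 = N + (n + 1) from by omega, pow_add]; ring
      _ = (c * (1/2:ℝ)^N) * 1 := by rw [tsum_mul_left, tsum_halves]
      _ = c * (1/2:ℝ)^N := mul_one _
  have hhead : ∑ n ∈ Finset.range N, g n ≤ ε / 2 := by
    calc ∑ n ∈ Finset.range N, g n ≤ ∑ n ∈ Finset.range N, (1/2:ℝ)^(n+1) * (ε/2) :=
          Finset.sum_le_sum fun n hn => hgh n (Finset.mem_range.1 hn)
      _ ≤ ε / 2 := by
          rw [← Finset.sum_mul]
          have h5 : ∑ n ∈ Finset.range N, (1/2:ℝ)^(n+1) ≤ 1 :=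
            calc ∑ n ∈ Finset.range N, (1/2:ℝ)^(n+1)
                ≤ ∑' n : ℕ, (1/2:ℝ)^(n+1) :=
                  Summable.sum_le_tsum _ (fun n _ => by positivity) half_pow_summable
              _ = 1 := tsum_halves
          nlinarith
  calc ∑' n, g n = (∑ n ∈ Finset.range N, g n) + ∑' n, g (n + N) := hsplit.symm
    _ ≤ ε/2 + c * (1/2:ℝ)^N := by linarith
    _ < ε/2 + ε/2 := by linarith
    _ = ε := add_halves ε

lemma dB_small {D : ℝ} (hD : ∀ p q : M, dist p q ≤ D) (hD0 : 0 ≤ D)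
    (x : ℕ → M) {ε : ℝ} (hε : 0 < ε) :
    ∀ᶠ y in 𝓝 x, dB x y < ε := by
  obtain ⟨N, hN⟩ : ∃ N : ℕ, D * (1 / 2 : ℝ) ^ N < ε / 2 := by
    obtain ⟨N, hN⟩ := exists_pow_lt_of_lt_one (y := (1/2 : ℝ))
      (x := ε / 2 / (D + 1)) (by positivity) (by norm_num)
    refine ⟨N, ?_⟩
    have h1 : (1/2:ℝ)^N ≤ ε / 2 / (D+1) := hN.le
    have h2 : D * (1/2:ℝ)^N ≤ D * (ε / 2 / (D+1)) :=
      mul_le_mul_of_nonneg_left h1 hD0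
    have h3 : D * (ε / 2 / (D + 1)) < ε / 2 := by
      rw [mul_div_assoc']
      rw [div_lt_iff₀ (by linarith)]
      nlinarith
    linarith
  have hopen : ∀ n : ℕ, IsOpen {y : ℕ → M | dist (x n) (y n) < ε / 2} := fun n =>
    isOpen_lt (Continuous.dist continuous_const (continuous_apply n)) continuous_const
  have hmem : {y : ℕ → M | ∀ n < N, dist (x n) (y n) < ε / 2} ∈ 𝓝 x := by
    have heq : {y : ℕ → M | ∀ n < N, dist (x n) (y n) < ε / 2} = ⋂ n ∈ Finset.range N,
        {y : ℕ → M | dist (x n) (y n) < ε / 2} := by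
      ext y; simp [Finset.mem_range]
    rw [heq]
    exact (Filter.biInter_finset_mem _).2 fun n _ =>
      (hopen n).mem_nhds (by simp [hε])
  filter_upwards [hmem] with y hy
  refine tsum_head_tail hD0 hε N (fun n => by positivity) (fun n => ?_) (fun n hn => ?_) hN
  · exact mul_le_mul_of_nonneg_left (hD _ _) (by positivity)
  · exact mul_le_mul_of_nonneg_left (hy n hn).le (by positivity)

end DBlem

section Tsec
variable {M : Type*} [MetricSpace M] [CompactSpace M] [Nonempty M]
  [MeasurableSpace M] [BorelSpace M]

lemma pcons_cont (x : ℕ → M) : Continuous fun a : M => pcons a x := by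
  apply continuous_pi
  intro n
  cases n with
  | zero => exact continuous_id
  | succ n => exact continuous_const

variable (ν : Measure M) [IsProbabilityMeasure ν]

def Tfun (A u : (ℕ → M) → ℝ) : (ℕ → M) → ℝ :=
  fun x => Real.log (∫ a, Real.exp (A (pcons a x) + u (pcons a x)) ∂ν)

lemma integrable_exp_comp {f : M → ℝ} (hf : Continuous f) :
    Integrable (fun a => Real.exp (f a)) ν :=
  (Real.continuous_exp.comp hf).integrable_of_hasCompactSupport
    (HasCompactSupport.of_compactSpace _)

lemma int_exp_pos {f : M → ℝ} (hf : Continuous f) :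
    0 < ∫ a, Real.exp (f a) ∂ν := by
  obtain ⟨m, hm⟩ : ∃ m : ℝ, ∀ a : M, m ≤ f a := by
    obtain ⟨a₀, -, ha₀⟩ := isCompact_univ.exists_isMinOn (Set.univ_nonempty) hf.continuousOn
    exact ⟨f a₀, fun a => ha₀ (Set.mem_univ a)⟩
  have h1 : (0:ℝ) < Real.exp m := Real.exp_pos m
  calc (0:ℝ) < Real.exp m := h1
    _ = ∫ _ : M, Real.exp m ∂ν := by
        rw [integral_const]; simp
    _ ≤ ∫ a, Real.exp (f a) ∂ν := by
        apply integral_mono (integrable_const _) (integrable_exp_comp ν hf)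
        intro a
        exact Real.exp_le_exp.2 (hm a)

/-- The basic comparison lemma for `log ∫ exp`. -/
lemma log_int_exp_le {f g : M → ℝ} (hf : Continuous f) (hg : Continuous g) {r : ℝ}
    (h : ∀ a, f a ≤ g a + r) :
    Real.log (∫ a, Real.exp (f a) ∂ν) ≤ Real.log (∫ a, Real.exp (g a) ∂ν) + r := by
  have h1 : ∫ a, Real.exp (f a) ∂ν ≤ ∫ a, Real.exp (g a + r) ∂ν := by
    apply integral_mono (integrable_exp_comp ν hf)
      (integrable_exp_comp ν (by continuity))
    intro a
    exact Real.exp_le_exp.2 (h a)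
  have h2 : ∫ a, Real.exp (g a + r) ∂ν = (∫ a, Real.exp (g a) ∂ν) * Real.exp r := by
    simp_rw [Real.exp_add]
    rw [integral_mul_const]
  calc Real.log (∫ a, Real.exp (f a) ∂ν)
      ≤ Real.log ((∫ a, Real.exp (g a) ∂ν) * Real.exp r) := by
        apply Real.log_le_log (int_exp_pos ν hf)
        rw [← h2]; exact h1
    _ = Real.log (∫ a, Real.exp (g a) ∂ν) + r := by
        rw [Real.log_mul (ne_of_gt (int_exp_pos ν hg)) (Real.exp_ne_zero r),
          Real.log_exp]

end Tsec

section Work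
variable {M : Type*} [MetricSpace M] [CompactSpace M] [Nonempty M]
  [MeasurableSpace M] [BorelSpace M]
variable (ν : Measure M) [IsProbabilityMeasure ν]

/-- Workhorse comparison lemma for `Tfun`. -/
lemma Tfun_le {A : (ℕ → M) → ℝ} (hA : Continuous A) {u v : (ℕ → M) → ℝ}
    (hu : Continuous u) (hv : Continuous v) {r : ℝ} (x y : ℕ → M)
    (h : ∀ a, A (pcons a x) + u (pcons a x) ≤ A (pcons a y) + v (pcons a y) + r) :
    Tfun ν A u x ≤ Tfun ν A v y + r :=
  log_int_exp_le ν ((hA.comp (pcons_cont x)).add (hu.comp (pcons_cont x)))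
    ((hA.comp (pcons_cont y)).add (hv.comp (pcons_cont y))) h

lemma exp_Tfun {A u : (ℕ → M) → ℝ} (hA : Continuous A) (hu : Continuous u) (x : ℕ → M) :
    Real.exp (Tfun ν A u x) = ∫ a, Real.exp (A (pcons a x) + u (pcons a x)) ∂ν :=
  Real.exp_log (int_exp_pos ν ((hA.comp (pcons_cont x)).add (hu.comp (pcons_cont x))))

end Work

lemma exp_sub_exp_le {s r R : ℝ} (hsr : s ≤ r) (hrR : r ≤ R) :
    Real.exp r - Real.exp s ≤ Real.exp R * (r - s) := by
  have h1 : s - r + 1 ≤ Real.exp (s - r) := Real.add_one_le_exp (s - r)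
  have h2 : Real.exp r * (s - r + 1) ≤ Real.exp r * Real.exp (s - r) :=
    mul_le_mul_of_nonneg_left h1 (Real.exp_pos r).le
  rw [← Real.exp_add] at h2
  have h3 : Real.exp (r + (s - r)) = Real.exp s := by ring_nf
  rw [h3] at h2
  have h4 : Real.exp r - Real.exp s ≤ Real.exp r * (r - s) := by nlinarith
  have h5 : Real.exp r ≤ Real.exp R := Real.exp_le_exp.2 hrR
  nlinarith [sub_nonneg.2 hsr]

lemma dB_comm {M : Type*} [MetricSpace M] (x y : ℕ → M) : dB x y = dB y x :=
  tsum_congr fun n => by rw [dist_comm]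


/-- existence of a strictly positive Hölder eigenfunction
with strictly positive eigenvalue for the Ruelle operator. -/
theorem exists_eigenfunction {M : Type*} [MetricSpace M] [CompactSpace M] [Nonempty M]
    [MeasurableSpace M] [BorelSpace M]
    (ν : Measure M) [IsProbabilityMeasure ν]
    (hsupp : ∀ U : Set M, IsOpen U → U.Nonempty → 0 < ν U)
    {α : ℝ} (hα : 0 < α)
    (A : (ℕ → M) → ℝ) (hA : HolderF α A) :
    ∃ (ψ : (ℕ → M) → ℝ) (lam : ℝ), 0 < lam ∧ HolderF α ψ ∧ (∀ x, 0 < ψ x) ∧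
      ∀ x, Ruelle ν A ψ x = lam * ψ x := by
  classical
  obtain ⟨C, hC0, hAcont, hAH⟩ := hA
  obtain ⟨D, hD0, hD⟩ : ∃ D : ℝ, 0 ≤ D ∧ ∀ p q : M, dist p q ≤ D := by
    obtain ⟨D, hD⟩ := Metric.isBounded_iff.1
      (isCompact_univ : IsCompact (Set.univ : Set M)).isBounded
    exact ⟨max D 0, le_max_right _ _,
      fun p q => le_max_of_le_left (hD trivial trivial)⟩
  set x₀ : ℕ → M := fun _ => Classical.arbitrary M with hx₀
  have h2α : (1:ℝ) < (2:ℝ) ^ α :=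
    (Real.one_lt_rpow_iff_of_pos (by norm_num)).2 (Or.inl ⟨one_lt_two, hα⟩)
  set K : ℝ := C / ((2:ℝ)^α - 1) with hKdef
  have hK0 : 0 ≤ K := div_nonneg hC0 (by linarith)
  have hCK : C + K = K * (2:ℝ)^α := by
    have hne : (2:ℝ)^α - 1 ≠ 0 := ne_of_gt (by linarith)
    have h5 : K * ((2:ℝ)^α - 1) = C := by rw [hKdef]; exact div_mul_cancel₀ C hne
    have h6 : K * ((2:ℝ)^α - 1) = K * (2:ℝ)^α - K := by ring
    linarith
  set R : ℝ := K * D ^ α with hRdef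
  have hR0 : 0 ≤ R := mul_nonneg hK0 (Real.rpow_nonneg hD0 α)
  have hdBbound : ∀ x y : ℕ → M, dB x y ^ α ≤ D ^ α := fun x y =>
    Real.rpow_le_rpow (dB_nonneg x y) (dB_le_D hD hD0 x y) hα.le
  -- Hölder implies continuous
  have hHC : ∀ (K' : ℝ) (f : (ℕ → M) → ℝ), 0 ≤ K' →
      (∀ x y, |f x - f y| ≤ K' * dB x y ^ α) → Continuous f := by
    intro K' f hK' hf
    rw [continuous_iff_continuousAt]
    intro x
    rw [ContinuousAt, Metric.tendsto_nhds]
    intro ε hε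
    set δ : ℝ := (ε / (K' + 1)) ^ α⁻¹ with hδdef
    have hδpos : 0 < δ := Real.rpow_pos_of_pos (by positivity) _
    filter_upwards [dB_small hD hD0 x hδpos] with y hy
    have h1 : dB x y ^ α ≤ δ ^ α :=
      Real.rpow_le_rpow (dB_nonneg x y) hy.le hα.le
    have h2 : δ ^ α = ε / (K' + 1) := Real.rpow_inv_rpow (by positivity) (ne_of_gt hα)
    have h3 : |f x - f y| ≤ K' * (ε / (K'+1)) := by
      calc |f x - f y| ≤ K' * dB x y ^ α := hf x y
        _ ≤ K' * (ε / (K'+1)) := by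
            rw [← h2]; exact mul_le_mul_of_nonneg_left h1 hK'
    rw [Real.dist_eq]
    have h4 : K' * (ε / (K'+1)) < ε := by
      rw [mul_div_assoc', div_lt_iff₀ (by positivity)]
      nlinarith
    rw [abs_sub_comm]
    linarith
  -- the set 𝒦
  set KSet : Set ((ℕ → M) →ᵇ ℝ) :=
    {u | u x₀ = 0 ∧ ∀ x y, |u x - u y| ≤ K * dB x y ^ α} with hKSetdef
  have h0K : (0 : (ℕ → M) →ᵇ ℝ) ∈ KSet := by
    constructor
    · rfl
    · intro x y
      simpa using mul_nonneg hK0 (Real.rpow_nonneg (dB_nonneg x y) α)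
  have hKbound : ∀ u : (ℕ → M) →ᵇ ℝ, u ∈ KSet → ∀ x, |u x| ≤ R := by
    intro u hu x
    have h1 := hu.2 x x₀
    rw [hu.1, sub_zero] at h1
    have h2 : K * dB x x₀ ^ α ≤ R :=
      mul_le_mul_of_nonneg_left (hdBbound x x₀) hK0
    linarith
  have hKclosed : IsClosed KSet := by
    have h1 : IsClosed {u : (ℕ → M) →ᵇ ℝ | u x₀ = 0} :=
      isClosed_eq (continuous_eval_const _) continuous_const
    have h2 : IsClosed {u : (ℕ → M) →ᵇ ℝ | ∀ x y, |u x - u y| ≤ K * dB x y ^ α} := by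
      have heq : {u : (ℕ → M) →ᵇ ℝ | ∀ x y, |u x - u y| ≤ K * dB x y ^ α}
          = ⋂ x, ⋂ y, {u : (ℕ → M) →ᵇ ℝ | |u x - u y| ≤ K * dB x y ^ α} := by
        ext u; simp
      rw [heq]
      refine isClosed_iInter fun x => isClosed_iInter fun y => ?_
      exact isClosed_le (((continuous_eval_const _).sub
        (continuous_eval_const _)).abs) continuous_const
    exact h1.inter h2
  have hKequi : Equicontinuous ((↑) : KSet → (ℕ → M) → ℝ) := by
    intro x
    rw [Metric.equicontinuousAt_iff_right]
    intro ε hε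
    set δ : ℝ := (ε / 2 / (K + 1)) ^ α⁻¹ with hδdef
    have hδpos : 0 < δ := Real.rpow_pos_of_pos (by positivity) _
    filter_upwards [dB_small hD hD0 x hδpos] with y hy
    intro i
    have h1 : dB x y ^ α ≤ δ ^ α :=
      Real.rpow_le_rpow (dB_nonneg x y) hy.le hα.le
    have h2 : δ ^ α = ε / 2 / (K + 1) := Real.rpow_inv_rpow (by positivity) (ne_of_gt hα)
    have h3 := i.2.2 x y
    have h4 : K * dB x y ^ α ≤ K * (ε / 2 / (K+1)) := by
      rw [← h2]; exact mul_le_mul_of_nonneg_left h1 hK0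
    have h5 : K * (ε / 2 / (K+1)) < ε := by
      rw [mul_div_assoc', div_lt_iff₀ (by positivity)]
      nlinarith
    rw [Real.dist_eq]
    calc |(i : (ℕ → M) →ᵇ ℝ) x - (i : (ℕ → M) →ᵇ ℝ) y| ≤ K * dB x y ^ α := h3
      _ < ε := by linarith
  have hKcompact : IsCompact KSet := by
    apply BoundedContinuousFunction.arzela_ascoli₂ (Metric.closedBall (0:ℝ) R)
      (isCompact_closedBall _ _) KSet hKclosed
    · intro u x hu
      rw [Metric.mem_closedBall, Real.dist_eq, sub_zero]
      exact hKbound u hu x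
    · exact hKequi
  -- Hölder estimate for Tfun
  have hTholder : ∀ u : (ℕ → M) →ᵇ ℝ, (∀ x y, |u x - u y| ≤ K * dB x y ^ α) →
      ∀ x y, |Tfun ν A ⇑u x - Tfun ν A ⇑u y| ≤ K * dB x y ^ α := by
    intro u hu
    have key : ∀ x y : ℕ → M, Tfun ν A ⇑u x ≤ Tfun ν A ⇑u y + K * dB x y ^ α := by
      intro x y
      apply Tfun_le ν hAcont u.continuous u.continuous
      intro a
      have hdd : dB (pcons a x) (pcons a y) = dB x y / 2 := dB_pcons hD a x y
      have h1 : A (pcons a x) - A (pcons a y) ≤ C * (dB x y / 2) ^ α := by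
        have h := hAH (pcons a x) (pcons a y)
        rw [hdd] at h
        linarith [le_abs_self (A (pcons a x) - A (pcons a y))]
      have h2 : u (pcons a x) - u (pcons a y) ≤ K * (dB x y / 2) ^ α := by
        have h := hu (pcons a x) (pcons a y)
        rw [hdd] at h
        linarith [le_abs_self (u (pcons a x) - u (pcons a y))]
      have h3 : (dB x y / 2) ^ α = dB x y ^ α / 2 ^ α :=
        Real.div_rpow (dB_nonneg x y) (by norm_num) α
      have h4 : C * (dB x y / 2) ^ α + K * (dB x y / 2) ^ α = K * dB x y ^ α := by
        have h2ne : ((2:ℝ) ^ α) ≠ 0 := ne_of_gt (Real.rpow_pos_of_pos (by norm_num) α)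
        rw [h3]
        field_simp
        rw [hCK]
        ring
      linarith
    intro x y
    rw [abs_sub_le_iff]
    constructor
    · linarith [key x y]
    · have h := key y x
      rw [dB_comm y x] at h
      linarith
  -- Lipschitz estimate for Tfun in u
  have hTlip : ∀ u v : (ℕ → M) →ᵇ ℝ, ∀ x, |Tfun ν A ⇑u x - Tfun ν A ⇑v x| ≤ dist u v := by
    have key : ∀ u v : (ℕ → M) →ᵇ ℝ, ∀ x, Tfun ν A ⇑u x ≤ Tfun ν A ⇑v x + dist u v := by
      intro u v x
      apply Tfun_le ν hAcont u.continuous v.continuous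
      intro a
      have h1 := BoundedContinuousFunction.dist_coe_le_dist (f := u) (g := v) (pcons a x)
      rw [Real.dist_eq] at h1
      linarith [le_abs_self (u (pcons a x) - v (pcons a x))]
    intro u v x
    rw [abs_sub_le_iff]
    constructor
    · linarith [key u v x]
    · have h := key v u x
      rw [dist_comm v u] at h
      linarith
  -- the normalized transfer map S
  have hS : ∀ u : (ℕ → M) →ᵇ ℝ, u ∈ KSet → ∃ v : (ℕ → M) →ᵇ ℝ, v ∈ KSet ∧
      ∀ x, v x = Tfun ν A ⇑u x - Tfun ν A ⇑u x₀ := by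
    intro u hu
    have hH : ∀ x y, |(Tfun ν A ⇑u x - Tfun ν A ⇑u x₀) - (Tfun ν A ⇑u y - Tfun ν A ⇑u x₀)|
        ≤ K * dB x y ^ α := by
      intro x y
      have h := hTholder u hu.2 x y
      have heq : (Tfun ν A ⇑u x - Tfun ν A ⇑u x₀) - (Tfun ν A ⇑u y - Tfun ν A ⇑u x₀)
          = Tfun ν A ⇑u x - Tfun ν A ⇑u y := by ring
      rw [heq]
      exact h
    have hcont : Continuous fun x => Tfun ν A ⇑u x - Tfun ν A ⇑u x₀ := hHC K _ hK0 hH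
    refine ⟨BoundedContinuousFunction.mkOfCompact ⟨_, hcont⟩, ⟨?_, ?_⟩, fun x => rfl⟩
    · show Tfun ν A ⇑u x₀ - Tfun ν A ⇑u x₀ = 0
      exact sub_self _
    · intro x y
      exact hH x y
  choose S hS1 hS2 using hS
  -- scaling keeps us in KSet
  have hsmulK : ∀ (t : ℝ), 0 ≤ t → t ≤ 1 → ∀ u : (ℕ → M) →ᵇ ℝ, u ∈ KSet → t • u ∈ KSet := by
    intro t ht0 ht1 u hu
    constructor
    · show (t • u) x₀ = 0
      rw [BoundedContinuousFunction.coe_smul]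
      simp [hu.1]
    · intro x y
      show |(t • u) x - (t • u) y| ≤ _
      rw [BoundedContinuousFunction.coe_smul]
      simp only [Pi.smul_apply, smul_eq_mul]
      rw [← mul_sub, abs_mul, abs_of_nonneg ht0]
      calc t * |u x - u y| ≤ 1 * (K * dB x y ^ α) :=
            mul_le_mul ht1 (hu.2 x y) (abs_nonneg _) zero_le_one
        _ = K * dB x y ^ α := one_mul _
  -- fixed point of the damped map, for each t < 1
  have hfix : ∀ t : ℝ, 0 ≤ t → t < 1 → ∃ u : (ℕ → M) →ᵇ ℝ, u ∈ KSet ∧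
      ∀ x, u x = t * (Tfun ν A ⇑u x - Tfun ν A ⇑u x₀) := by
    intro t ht0 ht1
    set step : {u : (ℕ → M) →ᵇ ℝ // u ∈ KSet} → {u : (ℕ → M) →ᵇ ℝ // u ∈ KSet} :=
      fun p => ⟨t • S p.1 p.2, hsmulK t ht0 ht1.le _ (hS1 p.1 p.2)⟩ with hstepdef
    set v : ℕ → {u : (ℕ → M) →ᵇ ℝ // u ∈ KSet} := fun k => step^[k] ⟨0, h0K⟩ with hvdef
    have hv0 : (v 0).1 = 0 := rfl
    have hvs : ∀ k, v (k + 1) = step (v k) := fun k => Function.iterate_succ_apply' step k _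
    have hvx₀ : ∀ k, (v k).1 x₀ = 0 := fun k => (v k).2.1
    have hvapp : ∀ k x, (v (k+1)).1 x
        = t * (Tfun ν A ⇑(v k).1 x - Tfun ν A ⇑(v k).1 x₀) := by
      intro k x
      rw [hvs k]
      show (t • S (v k).1 (v k).2) x = _
      rw [BoundedContinuousFunction.coe_smul]
      simp only [Pi.smul_apply, smul_eq_mul]
      rw [hS2 (v k).1 (v k).2 x]
    have hosc : ∀ k, ∃ m : ℝ, ∀ z, m ≤ (v (k+1)).1 z - (v k).1 z ∧
        (v (k+1)).1 z - (v k).1 z ≤ m + 2 * R * t ^ k := by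
      intro k
      induction k with
      | zero =>
        refine ⟨-R, fun z => ?_⟩
        have hb := hKbound (v 1).1 (v 1).2 z
        have hb' := abs_le.1 hb
        rw [hv0]
        simp only [BoundedContinuousFunction.coe_zero, Pi.zero_apply, sub_zero, pow_zero]
        constructor
        · linarith [hb'.1]
        · linarith [hb'.2]
      | succ k ih =>
        obtain ⟨m, hm⟩ := ih
        have hTub : ∀ x : ℕ → M, Tfun ν A ⇑(v (k+1)).1 x
            ≤ Tfun ν A ⇑(v k).1 x + (m + 2 * R * t ^ k) := by
          intro x
          apply Tfun_le ν hAcont (v (k+1)).1.continuous (v k).1.continuous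
          intro a
          have h := (hm (pcons a x)).2
          linarith
        have hTlb : ∀ x : ℕ → M, Tfun ν A ⇑(v k).1 x
            ≤ Tfun ν A ⇑(v (k+1)).1 x + (-m) := by
          intro x
          apply Tfun_le ν hAcont (v k).1.continuous (v (k+1)).1.continuous
          intro a
          have h := (hm (pcons a x)).1
          linarith
        refine ⟨t * (m - (Tfun ν A ⇑(v (k+1)).1 x₀ - Tfun ν A ⇑(v k).1 x₀)), fun z => ?_⟩
        have e1 := hvapp (k+1) z
        have e2 := hvapp k z
        set p := Tfun ν A ⇑(v (k+1)).1 z with hp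
        set q := Tfun ν A ⇑(v k).1 z with hq
        set p0 := Tfun ν A ⇑(v (k+1)).1 x₀ with hp0
        set q0 := Tfun ν A ⇑(v k).1 x₀ with hq0
        have hPm : m ≤ p - q := by have := hTlb z; linarith
        have hPM : p - q ≤ m + 2 * R * t ^ k := by have := hTub z; linarith
        have hQm : m ≤ p0 - q0 := by have := hTlb x₀; linarith
        have hQM : p0 - q0 ≤ m + 2 * R * t ^ k := by have := hTub x₀; linarith
        rw [e1, e2]
        constructor
        · have h1 : t * (m - (p0 - q0)) ≤ t * ((p - q) - (p0 - q0)) :=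
            mul_le_mul_of_nonneg_left (by linarith) ht0
          have h2 : t * ((p - q) - (p0 - q0)) = t * (p - p0) - t * (q - q0) := by ring
          linarith
        · have h1 : t * ((p - q) - (p0 - q0))
              ≤ t * ((m - (p0 - q0)) + 2 * R * t ^ k) :=
            mul_le_mul_of_nonneg_left (by linarith) ht0
          have h2 : t * ((p - q) - (p0 - q0)) = t * (p - p0) - t * (q - q0) := by ring
          have h3 : t * ((m - (p0 - q0)) + 2 * R * t ^ k)
              = t * (m - (p0 - q0)) + 2 * R * t ^ (k+1) := by rw [pow_succ]; ring
          linarith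
    have hdistv : ∀ k, dist ((v k).1) ((v (k+1)).1) ≤ (2 * R) * t ^ k := by
      intro k
      obtain ⟨m, hm⟩ := hosc k
      have hm0 := hm x₀
      rw [hvx₀, hvx₀] at hm0
      rw [BoundedContinuousFunction.dist_le (by positivity)]
      intro z
      rw [Real.dist_eq]
      have hz := hm z
      rw [abs_le]
      constructor
      · linarith [hz.2, hm0.1, hm0.2]
      · linarith [hz.1, hm0.1, hm0.2]
    have hcauchy : CauchySeq (fun k => (v k).1) :=
      cauchySeq_of_le_geometric t (2 * R) ht1 hdistv
    obtain ⟨u, hu⟩ := cauchySeq_tendsto_of_complete hcauchy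
    have huK : u ∈ KSet :=
      hKclosed.mem_of_tendsto hu (Filter.Eventually.of_forall fun k => (v k).2)
    refine ⟨u, huK, fun x => ?_⟩
    have hd0 : Tendsto (fun k => dist ((v k).1) u) atTop (𝓝 0) :=
      tendsto_iff_dist_tendsto_zero.1 hu
    have habs : ∀ ε : ℝ, 0 < ε → |u x - t * (Tfun ν A ⇑u x - Tfun ν A ⇑u x₀)| ≤ ε := by
      intro ε hε
      have hev : ∀ᶠ k in atTop, dist ((v k).1) u < ε/4 :=
        hd0.eventually (gt_mem_nhds (by positivity))
      obtain ⟨N, hN⟩ := Filter.eventually_atTop.1 hev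
      have hdN : dist ((v N).1) u < ε/4 := hN N le_rfl
      have hdN1 : dist ((v (N+1)).1) u < ε/4 := hN (N+1) (Nat.le_succ N)
      have e4 := hvapp N x
      have a1 : |u x - (v (N+1)).1 x| ≤ ε/4 := by
        have h := BoundedContinuousFunction.dist_coe_le_dist (f := (v (N+1)).1) (g := u) x
        rw [Real.dist_eq] at h
        rw [abs_sub_comm]
        linarith
      have b1 : |Tfun ν A ⇑(v N).1 x - Tfun ν A ⇑u x| ≤ ε/4 :=
        le_trans (hTlip (v N).1 u x) hdN.le
      have b2 : |Tfun ν A ⇑(v N).1 x₀ - Tfun ν A ⇑u x₀| ≤ ε/4 :=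
        le_trans (hTlip (v N).1 u x₀) hdN.le
      have heq : u x - t * (Tfun ν A ⇑u x - Tfun ν A ⇑u x₀)
          = (u x - (v (N+1)).1 x)
            + t * ((Tfun ν A ⇑(v N).1 x - Tfun ν A ⇑u x)
              - (Tfun ν A ⇑(v N).1 x₀ - Tfun ν A ⇑u x₀)) := by
        rw [e4]; ring
      rw [heq]
      have c1 := abs_le.1 a1
      have c2 := abs_le.1 b1
      have c3 := abs_le.1 b2
      rw [abs_le]
      constructor
      · nlinarith [c1.1, c2.1, c3.2, ht0, ht1.le]
      · nlinarith [c1.2, c2.2, c3.1, ht0, ht1.le]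
    have hzero : |u x - t * (Tfun ν A ⇑u x - Tfun ν A ⇑u x₀)| ≤ 0 := by
      by_contra h
      push_neg at h
      have := habs (|u x - t * (Tfun ν A ⇑u x - Tfun ν A ⇑u x₀)| / 2) (by linarith)
      linarith
    have := abs_nonneg (u x - t * (Tfun ν A ⇑u x - Tfun ν A ⇑u x₀))
    have heq0 : u x - t * (Tfun ν A ⇑u x - Tfun ν A ⇑u x₀) = 0 := by
      rw [← abs_eq_zero]; linarith
    linarith
  -- approximate fixed points of the full map
  have hseq : ∀ n : ℕ, ∃ u : (ℕ → M) →ᵇ ℝ, u ∈ KSet ∧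
      ∀ x, |u x - (Tfun ν A ⇑u x - Tfun ν A ⇑u x₀)| ≤ R / ((n:ℝ)+1) := by
    intro n
    have hpos : (0:ℝ) < (n:ℝ) + 1 := by positivity
    have ht0 : (0:ℝ) ≤ 1 - 1/((n:ℝ)+1) := by
      rw [sub_nonneg]
      rw [div_le_one hpos]
      linarith [Nat.cast_nonneg (α := ℝ) n]
    have ht1 : 1 - 1/((n:ℝ)+1) < 1 := by
      have : 0 < 1/((n:ℝ)+1) := by positivity
      linarith
    obtain ⟨u, huK, hufix⟩ := hfix (1 - 1/((n:ℝ)+1)) ht0 ht1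
    refine ⟨u, huK, fun x => ?_⟩
    have h1 : |Tfun ν A ⇑u x - Tfun ν A ⇑u x₀| ≤ R := by
      have h := hTholder u huK.2 x x₀
      have h2 : K * dB x x₀ ^ α ≤ R :=
        mul_le_mul_of_nonneg_left (hdBbound x x₀) hK0
      linarith
    have h2 : u x - (Tfun ν A ⇑u x - Tfun ν A ⇑u x₀)
        = -(1/((n:ℝ)+1)) * (Tfun ν A ⇑u x - Tfun ν A ⇑u x₀) := by
      rw [hufix x]; ring
    rw [h2, abs_mul, abs_neg, abs_of_nonneg (by positivity : (0:ℝ) ≤ 1/((n:ℝ)+1))]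
    calc 1/((n:ℝ)+1) * |Tfun ν A ⇑u x - Tfun ν A ⇑u x₀| ≤ 1/((n:ℝ)+1) * R :=
          mul_le_mul_of_nonneg_left h1 (by positivity)
      _ = R / ((n:ℝ)+1) := by ring
  choose w hwK hwfix using hseq
  obtain ⟨u, huK, φ, hφ, hconv⟩ := hKcompact.tendsto_subseq hwK
  have hfixu : ∀ x, u x = Tfun ν A ⇑u x - Tfun ν A ⇑u x₀ := by
    intro x
    have hd0 : Tendsto (fun n => dist (w (φ n)) u) atTop (𝓝 0) :=
      tendsto_iff_dist_tendsto_zero.1 hconv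
    have habs : ∀ ε : ℝ, 0 < ε → |u x - (Tfun ν A ⇑u x - Tfun ν A ⇑u x₀)| ≤ ε := by
      intro ε hε
      have hev1 : ∀ᶠ n in atTop, dist (w (φ n)) u < ε/4 :=
        hd0.eventually (gt_mem_nhds (by positivity))
      have htend : Tendsto (fun n : ℕ => R / ((n:ℝ)+1)) atTop (𝓝 0) := by
        have h := tendsto_one_div_add_atTop_nhds_zero_nat.const_mul R
        rw [mul_zero] at h
        have heq : (fun n : ℕ => R * (1/((n:ℝ)+1))) = fun n : ℕ => R / ((n:ℝ)+1) := by
          funext n; ring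
        rwa [heq] at h
      have hev2' : ∀ᶠ n : ℕ in atTop, R / ((n:ℝ)+1) < ε/4 :=
        htend.eventually (gt_mem_nhds (by positivity))
      have hev2 : ∀ᶠ n in atTop, R / ((φ n : ℝ)+1) < ε/4 :=
        hφ.tendsto_atTop.eventually hev2'
      obtain ⟨N, hN1, hN2⟩ := (hev1.and hev2).exists
      have a1 : |u x - w (φ N) x| ≤ ε/4 := by
        have h := BoundedContinuousFunction.dist_coe_le_dist (f := w (φ N)) (g := u) x
        rw [Real.dist_eq] at h
        rw [abs_sub_comm]
        linarith
      have a2 : |w (φ N) x - (Tfun ν A ⇑(w (φ N)) x - Tfun ν A ⇑(w (φ N)) x₀)| ≤ ε/4 :=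
        le_trans (hwfix (φ N) x) hN2.le
      have a3 : |Tfun ν A ⇑(w (φ N)) x - Tfun ν A ⇑u x| ≤ ε/4 :=
        le_trans (hTlip (w (φ N)) u x) hN1.le
      have a4 : |Tfun ν A ⇑(w (φ N)) x₀ - Tfun ν A ⇑u x₀| ≤ ε/4 :=
        le_trans (hTlip (w (φ N)) u x₀) hN1.le
      have heq : u x - (Tfun ν A ⇑u x - Tfun ν A ⇑u x₀)
          = (u x - w (φ N) x)
            + (w (φ N) x - (Tfun ν A ⇑(w (φ N)) x - Tfun ν A ⇑(w (φ N)) x₀))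
            + ((Tfun ν A ⇑(w (φ N)) x - Tfun ν A ⇑u x)
              - (Tfun ν A ⇑(w (φ N)) x₀ - Tfun ν A ⇑u x₀)) := by ring
      rw [heq]
      have c1 := abs_le.1 a1
      have c2 := abs_le.1 a2
      have c3 := abs_le.1 a3
      have c4 := abs_le.1 a4
      rw [abs_le]
      constructor
      · linarith [c1.1, c2.1, c3.1, c4.2]
      · linarith [c1.2, c2.2, c3.2, c4.1]
    have hzero : |u x - (Tfun ν A ⇑u x - Tfun ν A ⇑u x₀)| ≤ 0 := by
      by_contra h
      push_neg at h
      have := habs (|u x - (Tfun ν A ⇑u x - Tfun ν A ⇑u x₀)| / 2) (by linarith)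
      linarith
    have hnn := abs_nonneg (u x - (Tfun ν A ⇑u x - Tfun ν A ⇑u x₀))
    have heq0 : u x - (Tfun ν A ⇑u x - Tfun ν A ⇑u x₀) = 0 := by
      rw [← abs_eq_zero]; linarith
    linarith
  -- assemble the eigenfunction
  refine ⟨fun z => Real.exp (u z), Real.exp (Tfun ν A ⇑u x₀), Real.exp_pos _, ?_, 
    fun z => Real.exp_pos _, ?_⟩
  · refine ⟨Real.exp R * K, by positivity,
      Real.continuous_exp.comp u.continuous, fun x y => ?_⟩
    have hbx := le_trans (le_abs_self _) (hKbound u huK x)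
    have hby := le_trans (le_abs_self _) (hKbound u huK y)
    have hHxy := huK.2 x y
    rcases le_total (u x) (u y) with h | h
    · rw [abs_sub_comm, abs_of_nonneg (sub_nonneg.2 (Real.exp_le_exp.2 h))]
      calc Real.exp (u y) - Real.exp (u x) ≤ Real.exp R * (u y - u x) :=
            exp_sub_exp_le h hby
        _ ≤ Real.exp R * (K * dB x y ^ α) := by
            apply mul_le_mul_of_nonneg_left _ (Real.exp_pos R).le
            have : u y - u x ≤ |u x - u y| := by
              rw [abs_sub_comm]; exact le_abs_self _
            linarith
        _ = (Real.exp R * K) * dB x y ^ α := by ring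
    · rw [abs_of_nonneg (sub_nonneg.2 (Real.exp_le_exp.2 h))]
      calc Real.exp (u x) - Real.exp (u y) ≤ Real.exp R * (u x - u y) :=
            exp_sub_exp_le h hbx
        _ ≤ Real.exp R * (K * dB x y ^ α) := by
            apply mul_le_mul_of_nonneg_left _ (Real.exp_pos R).le
            linarith [le_abs_self (u x - u y)]
        _ = (Real.exp R * K) * dB x y ^ α := by ring
  · intro x
    show (∫ a, Real.exp (A (pcons a x)) * Real.exp (u (pcons a x)) ∂ν) = _
    have hinteq : (∫ a, Real.exp (A (pcons a x)) * Real.exp (u (pcons a x)) ∂ν)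
        = ∫ a, Real.exp (A (pcons a x) + u (pcons a x)) ∂ν := by
      congr 1
      funext a
      rw [← Real.exp_add]
    rw [hinteq, ← exp_Tfun ν hAcont u.continuous x]
    have hTx : Tfun ν A ⇑u x = u x + Tfun ν A ⇑u x₀ := by
      have := hfixu x; linarith
    rw [hTx, Real.exp_add]
    ring
end
end

section
/- The only strictly positive Hölder continuous eigenfunction of the Ruelle operator L_A (up to multiplication by a positive constant) is the main eigenfunction ψ_A, and the corresponding eigenvalue must be λ_A. -/
open MeasureTheory Filter Topology

noncomputable section

/-- Iterates of the Ruelle operator on an eigenfunction. -/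
lemma ruelle_iter {M : Type*} [MetricSpace M] [MeasurableSpace M] (ν : Measure M)
    (A : (ℕ → M) → ℝ) (f : (ℕ → M) → ℝ) (l : ℝ)
    (hf : ∀ x, Ruelle ν A f x = l * f x) :
    ∀ n x, (Ruelle ν A)^[n] f x = l ^ n * f x := by
  intro n
  induction n with
  | zero => intro x; simp
  | succ n ih =>
    intro x
    rw [Function.iterate_succ_apply']
    have hfun : (Ruelle ν A)^[n] f = fun y => l ^ n * f y := funext fun y => ih y
    rw [hfun]
    calc Ruelle ν A (fun y => l ^ n * f y) x
        = ∫ a, l ^ n * (Real.exp (A (pcons a x)) * f (pcons a x)) ∂ν := by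
          unfold Ruelle; congr 1; funext a; ring
      _ = l ^ n * ∫ a, Real.exp (A (pcons a x)) * f (pcons a x) ∂ν :=
          MeasureTheory.integral_const_mul _ _
      _ = l ^ n * (l * f x) := congrArg (fun t => l ^ n * t) (hf x)
      _ = l ^ (n + 1) * f x := by ring

/-- uniqueness of the strictly positive Hölder eigenfunction, up to a
positive multiplicative constant; the eigenvalue must be the main eigenvalue. -/
theorem eigenfunction_unique {M : Type*} [MetricSpace M] [CompactSpace M] [Nonempty M]
    [MeasurableSpace M] [BorelSpace M]
    (ν : Measure M) [IsProbabilityMeasure ν]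
    (hsupp : ∀ U : Set M, IsOpen U → U.Nonempty → 0 < ν U)
    {α : ℝ} (hα : 0 < α)
    (A : (ℕ → M) → ℝ) (hA : HolderF α A)
    (ψA : (ℕ → M) → ℝ) (lamA : ℝ) (hlamA : 0 < lamA)
    (hψA : HolderF α ψA) (hψApos : ∀ x, 0 < ψA x)
    (heigA : ∀ x, Ruelle ν A ψA x = lamA * ψA x)
    (ρ : Measure (ℕ → M))
    (hρ : ∀ φ : (ℕ → M) → ℝ, Continuous φ →
      ∫ x, Ruelle ν A φ x ∂ρ = lamA * ∫ x, φ x ∂ρ)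
    (hconv : ∀ g : (ℕ → M) → ℝ, HolderF α g → ∀ x : ℕ → M,
      Tendsto (fun n => (Ruelle ν A)^[n] g x / lamA ^ n) atTop
        (nhds (ψA x * ∫ z, g z ∂ρ)))
    (ψ : (ℕ → M) → ℝ) (lam : ℝ) (hψ : HolderF α ψ) (hψpos : ∀ x, 0 < ψ x)
    (heig : ∀ x, Ruelle ν A ψ x = lam * ψ x) :
    lam = lamA ∧ ∃ c : ℝ, 0 < c ∧ ∀ x, ψ x = c * ψA x := by
  have hψc : Continuous ψ := hψ.choose_spec.2.1
  have hψAc : Continuous ψA := hψA.choose_spec.2.1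
  have hlamA' : lamA ≠ 0 := ne_of_gt hlamA
  have hne : Nonempty (ℕ → M) := inferInstance
  obtain ⟨x₀⟩ := hne
  -- ∫ ψA dρ = 1
  have hcA : (∫ z, ψA z ∂ρ) = 1 := by
    have h1 := hconv ψA hψA x₀
    have h2 : (fun n : ℕ => (Ruelle ν A)^[n] ψA x₀ / lamA ^ n)
        = fun _ : ℕ => ψA x₀ := by
      funext n
      rw [ruelle_iter ν A ψA lamA heigA n x₀]
      field_simp
    rw [h2] at h1
    have h3 : ψA x₀ = ψA x₀ * ∫ z, ψA z ∂ρ :=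
      tendsto_nhds_unique tendsto_const_nhds h1
    have h4 : ψA x₀ * 1 = ψA x₀ * ∫ z, ψA z ∂ρ := by rw [mul_one]; exact h3
    exact (mul_left_cancel₀ (hψApos x₀).ne' h4).symm
  -- ρ-integrability of ψA
  have hψAint : Integrable ψA ρ := by
    by_contra h
    rw [integral_undef h] at hcA
    exact one_ne_zero hcA.symm
  -- extrema on the compact space
  obtain ⟨xm, -, hxm⟩ := isCompact_univ.exists_isMinOn (Set.univ_nonempty)
    (hψAc.continuousOn (s := Set.univ))
  obtain ⟨ym, -, hym⟩ := isCompact_univ.exists_isMinOn (Set.univ_nonempty)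
    (hψc.continuousOn (s := Set.univ))
  obtain ⟨xM, -, hxM⟩ := isCompact_univ.exists_isMaxOn (Set.univ_nonempty)
    (hψc.continuousOn (s := Set.univ))
  obtain ⟨yM, -, hyM⟩ := isCompact_univ.exists_isMaxOn (Set.univ_nonempty)
    (hψAc.continuousOn (s := Set.univ))
  have hψAm : ∀ x, ψA xm ≤ ψA x := fun x => hxm (Set.mem_univ x)
  have hψm : ∀ x, ψ ym ≤ ψ x := fun x => hym (Set.mem_univ x)
  have hψM : ∀ x, ψ x ≤ ψ xM := fun x => hxM (Set.mem_univ x)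
  have hψAM : ∀ x, ψA x ≤ ψA yM := fun x => hyM (Set.mem_univ x)
  have hψAmpos : 0 < ψA xm := hψApos xm
  -- ρ is a finite measure
  haveI hfin : IsFiniteMeasure ρ := by
    have h1 : Integrable (fun _ : ℕ → M => ψA xm) ρ := by
      refine hψAint.mono' aestronglyMeasurable_const (Filter.Eventually.of_forall ?_)
      intro x
      rw [Real.norm_eq_abs, abs_of_pos hψAmpos]
      exact hψAm x
    rw [integrable_const_iff] at h1
    rcases h1 with h1 | h1
    · exact absurd h1 hψAmpos.ne'
    · exact h1
  -- ψ is ρ-integrable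
  have hψint : Integrable ψ ρ := by
    refine (integrable_const (ψ xM)).mono' (hψc.aestronglyMeasurable)
      (Filter.Eventually.of_forall ?_)
    intro x
    rw [Real.norm_eq_abs, abs_of_pos (hψpos x)]
    exact hψM x
  -- the constant c = ∫ ψ dρ is positive
  set c : ℝ := ∫ z, ψ z ∂ρ with hc
  have hk : 0 < ψ ym / ψA yM := div_pos (hψpos ym) (hψApos yM)
  have hcpos : 0 < c := by
    have hle : ∀ x, (ψ ym / ψA yM) * ψA x ≤ ψ x := by
      intro x
      calc (ψ ym / ψA yM) * ψA x ≤ (ψ ym / ψA yM) * ψA yM :=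
            mul_le_mul_of_nonneg_left (hψAM x) hk.le
        _ = ψ ym := div_mul_cancel₀ _ (hψApos yM).ne' 
        _ ≤ ψ x := hψm x
    have h1 : (ψ ym / ψA yM) * ∫ z, ψA z ∂ρ ≤ c := by
      rw [← integral_const_mul]
      exact integral_mono (hψAint.const_mul _) hψint hle
    rw [hcA, mul_one] at h1
    exact lt_of_lt_of_le hk h1
  -- the limit argument
  have hlim : ∀ x, Tendsto (fun n : ℕ => (lam / lamA) ^ n * ψ x) atTop
      (nhds (ψA x * c)) := by
    intro x
    have h1 := hconv ψ hψ x
    have h2 : (fun n : ℕ => (Ruelle ν A)^[n] ψ x / lamA ^ n)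
        = fun n : ℕ => (lam / lamA) ^ n * ψ x := by
      funext n
      rw [ruelle_iter ν A ψ lam heig n x, div_pow]
      ring
    rw [h2] at h1
    exact h1
  -- lam / lamA = 1
  have hrat : lam / lamA = 1 := by
    have h1 := hlim x₀
    have h2 : Tendsto (fun n : ℕ => (lam / lamA) ^ (n + 1) * ψ x₀) atTop
        (nhds (ψA x₀ * c)) := h1.comp (tendsto_add_atTop_nat 1)
    have h3 : (fun n : ℕ => (lam / lamA) ^ (n + 1) * ψ x₀)
        = fun n : ℕ => (lam / lamA) * ((lam / lamA) ^ n * ψ x₀) := by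
      funext n; ring
    rw [h3] at h2
    have h4 : Tendsto (fun n : ℕ => (lam / lamA) * ((lam / lamA) ^ n * ψ x₀)) atTop
        (nhds ((lam / lamA) * (ψA x₀ * c))) := h1.const_mul _
    have h5 : (lam / lamA) * (ψA x₀ * c) = ψA x₀ * c := tendsto_nhds_unique h4 h2
    have h6 : ψA x₀ * c ≠ 0 := ne_of_gt (mul_pos (hψApos x₀) hcpos)
    have h7 : (lam / lamA) * (ψA x₀ * c) = 1 * (ψA x₀ * c) := by rw [one_mul]; exact h5
    exact mul_right_cancel₀ h6 h7
  have hlameq : lam = lamA := (div_eq_one_iff_eq hlamA').mp hrat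
  refine ⟨hlameq, c, hcpos, ?_⟩
  intro x
  have h1 := hlim x
  rw [hrat] at h1
  simp only [one_pow, one_mul] at h1
  have h2 : ψ x = ψA x * c := tendsto_nhds_unique tendsto_const_nhds h1
  rw [h2]; ring
end
end

section
/- If μ is a shift-invariant probability on M^ℕ fixed by L_B^* for a normalized Hölder potential B, then the entropy h(μ) = −∫ B dμ satisfies h(μ) ≤ 0. -/
open MeasureTheory Filter Topology

noncomputable section

/-- the entropy `h(μ) = −∫ B dμ` of a Gibbs measure for a normalized
potential `B` is nonpositive. -/
theorem entropy_nonpos {M : Type*} [MetricSpace M] [CompactSpace M] [Nonempty M]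
    [MeasurableSpace M] [BorelSpace M]
    (ν : Measure M) [IsProbabilityMeasure ν]
    (hsupp : ∀ U : Set M, IsOpen U → U.Nonempty → 0 < ν U)
    {α : ℝ} (hα : 0 < α)
    (B : (ℕ → M) → ℝ) (hB : HolderF α B)
    (hnorm : ∀ x : ℕ → M, ∫ a, Real.exp (B (pcons a x)) ∂ν = 1)
    (μ : Measure (ℕ → M)) [IsProbabilityMeasure μ]
    (hinv : Measure.map shiftMap μ = μ)
    (hfix : ∀ ψ : (ℕ → M) → ℝ, Continuous ψ →
      ∫ x, Ruelle ν B ψ x ∂μ = ∫ x, ψ x ∂μ) :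
    -∫ x, B x ∂μ ≤ 0 := by
  obtain ⟨C, hC, hBcont, hHol⟩ := hB
  have hpcons : ∀ x : ℕ → M, Continuous (fun a : M => pcons a x) := by
    intro x
    apply continuous_pi
    intro n
    match n with
    | 0 => exact continuous_id
    | n + 1 => exact continuous_const
  have key : ∀ x : ℕ → M, 0 ≤ Ruelle ν B B x := by
    intro x
    have hc : Continuous (fun a : M => Real.exp (B (pcons a x)) * B (pcons a x)) :=
      ((Real.continuous_exp.comp (hBcont.comp (hpcons x))).mul (hBcont.comp (hpcons x)))
    have hc2 : Continuous (fun a : M => Real.exp (B (pcons a x)) - 1) :=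
      (Real.continuous_exp.comp (hBcont.comp (hpcons x))).sub continuous_const
    have hmono : ∀ a : M, Real.exp (B (pcons a x)) - 1 ≤
        Real.exp (B (pcons a x)) * B (pcons a x) := by
      intro a
      set b := B (pcons a x)
      have h1 : -b + 1 ≤ Real.exp (-b) := Real.add_one_le_exp (-b)
      have h2 : (0:ℝ) < Real.exp b := Real.exp_pos b
      have h3 : Real.exp (-b) * Real.exp b = 1 := by
        rw [← Real.exp_add]; simp
      nlinarith [mul_le_mul_of_nonneg_right h1 h2.le]
    have hint : ∫ a, (Real.exp (B (pcons a x)) - 1) ∂ν ≤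
        ∫ a, Real.exp (B (pcons a x)) * B (pcons a x) ∂ν :=
      integral_mono (hc2.integrable_of_hasCompactSupport (HasCompactSupport.of_compactSpace _)) (hc.integrable_of_hasCompactSupport (HasCompactSupport.of_compactSpace _)) hmono
    have heq : ∫ a, (Real.exp (B (pcons a x)) - 1) ∂ν = 0 := by
      have hce : Continuous (fun a : M => Real.exp (B (pcons a x))) :=
        Real.continuous_exp.comp (hBcont.comp (hpcons x))
      rw [integral_sub (hce.integrable_of_hasCompactSupport (HasCompactSupport.of_compactSpace _))
        (integrable_const 1), hnorm x, integral_const]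
      simp
    have : (0:ℝ) ≤ ∫ a, Real.exp (B (pcons a x)) * B (pcons a x) ∂ν := heq ▸ hint
    exact this
  have h := hfix B hBcont
  have : 0 ≤ ∫ x, B x ∂μ := by
    rw [← h]
    exact integral_nonneg key
  linarith
end
end

section
/- For a fixed Hölder A, the Gibbs measure μ with normalized potential B attains equality h(μ) = −∫ A dμ + log λ_A when A = B, and for every Gibbs measure μ, h(μ) ≤ −∫ A dμ + log λ_A for all Hölder A; consequently h(μ) = inf_{A Hölder} { −∫ A dμ + log λ_A }. -/
open MeasureTheory Filter Topology

noncomputable section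

lemma continuous_shiftMap {M : Type*} [TopologicalSpace M] :
    Continuous (shiftMap (M := M)) :=
  continuous_pi fun n => continuous_apply (n + 1)

lemma shiftMap_pcons {M : Type*} (a : M) (x : ℕ → M) : shiftMap (pcons a x) = x :=
  funext fun _ => rfl

/-- for a Gibbs measure `μ` with normalized potential `B`,
`h(μ) ≤ −∫ A dμ + log λ_A` for all Hölder `A`, with equality at `A = B`
(i.e. `log λ_B = 0`); hence `h(μ) = inf_A { −∫ A dμ + log λ_A }`. -/
theorem entropy_eq_inf_over_potentials {M : Type*} [MetricSpace M] [CompactSpace M]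
    [Nonempty M] [MeasurableSpace M] [BorelSpace M]
    (ν : Measure M) [IsProbabilityMeasure ν]
    (hsupp : ∀ U : Set M, IsOpen U → U.Nonempty → 0 < ν U)
    {α : ℝ} (hα : 0 < α)
    (lam : ((ℕ → M) → ℝ) → ℝ) (psi : ((ℕ → M) → ℝ) → (ℕ → M) → ℝ)
    (heig : ∀ A : (ℕ → M) → ℝ, HolderF α A → 0 < lam A ∧ HolderF α (psi A) ∧
      (∀ x, 0 < psi A x) ∧ ∀ x, Ruelle ν A (psi A) x = lam A * psi A x)
    (B : (ℕ → M) → ℝ) (hB : HolderF α B)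
    (hnorm : ∀ x : ℕ → M, ∫ a, Real.exp (B (pcons a x)) ∂ν = 1)
    (μ : Measure (ℕ → M)) [IsProbabilityMeasure μ]
    (hinv : Measure.map shiftMap μ = μ)
    (hfix : ∀ ψ : (ℕ → M) → ℝ, Continuous ψ →
      ∫ x, Ruelle ν B ψ x ∂μ = ∫ x, ψ x ∂μ) :
    (∀ A : (ℕ → M) → ℝ, HolderF α A →
        -∫ x, B x ∂μ ≤ (-∫ x, A x ∂μ) + Real.log (lam A)) ∧
      Real.log (lam B) = 0 ∧
      IsGLB {r : ℝ | ∃ A : (ℕ → M) → ℝ, HolderF α A ∧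
          r = (-∫ x, A x ∂μ) + Real.log (lam A)}
        (-∫ x, B x ∂μ) := by
  -- continuous functions on the compact space `ℕ → M` are integrable
  have hint : ∀ f : (ℕ → M) → ℝ, Continuous f → Integrable f μ := fun f hf =>
    hf.integrable_of_hasCompactSupport (isClosed_tsupport f).isCompact
  obtain ⟨CB, -, hBc, -⟩ := id hB
  -- Part 2 : `lam B = 1`
  obtain ⟨hlamBpos, hψBH, hψBpos, hψBeig⟩ := heig B hB
  obtain ⟨CψB, -, hψBc, -⟩ := id hψBH
  have hIeq : lam B * ∫ x, psi B x ∂μ = ∫ x, psi B x ∂μ := by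
    have h1 := hfix (psi B) hψBc
    calc lam B * ∫ x, psi B x ∂μ = ∫ x, lam B * psi B x ∂μ := (integral_const_mul _ _).symm
      _ = ∫ x, Ruelle ν B (psi B) x ∂μ := by simp_rw [hψBeig]
      _ = ∫ x, psi B x ∂μ := h1
  have hIpos : 0 < ∫ x, psi B x ∂μ := by
    rw [(integral_pos_iff_support_of_nonneg_ae
      (ae_of_all μ fun x => (hψBpos x).le) (hint _ hψBc))]
    have : Function.support (psi B) = Set.univ :=
      Set.eq_univ_of_forall fun x => (hψBpos x).ne'
    rw [this]
    simp
  have hlamB1 : lam B = 1 := mul_right_cancel₀ hIpos.ne' (by rw [one_mul]; exact hIeq)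
  have hlogB : Real.log (lam B) = 0 := by rw [hlamB1, Real.log_one]
  -- main inequality
  have key : ∀ A : (ℕ → M) → ℝ, HolderF α A →
      -∫ x, B x ∂μ ≤ (-∫ x, A x ∂μ) + Real.log (lam A) := by
    intro A hA
    obtain ⟨CA, -, hAc, -⟩ := id hA
    obtain ⟨hlam, hψH, hψpos, hψeig⟩ := heig A hA
    obtain ⟨Cψ, -, hψc, -⟩ := id hψH
    set ψ := psi A with hψdef
    set l := lam A with hldef
    -- the normalized potential associated to A
    set C : (ℕ → M) → ℝ := fun x =>
      A x + Real.log (ψ x) - Real.log (ψ (shiftMap x)) - Real.log l with hCdef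
    have hlogψc : Continuous fun x => Real.log (ψ x) :=
      hψc.log fun x => (hψpos x).ne'
    have hCc : Continuous C := by
      apply Continuous.sub
      · exact (hAc.add hlogψc).sub (hlogψc.comp continuous_shiftMap)
      · exact continuous_const
    -- `C` is normalized
    have step1 : ∀ x, ∫ a, Real.exp (C (pcons a x)) ∂ν = 1 := by
      intro x
      have hpt : ∀ a : M, Real.exp (C (pcons a x)) =
          Real.exp (A (pcons a x)) * ψ (pcons a x) * (ψ x * l)⁻¹ := by
        intro a
        simp only [hCdef, shiftMap_pcons]
        rw [Real.exp_sub, Real.exp_sub, Real.exp_add, Real.exp_log (hψpos _),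
          Real.exp_log (hψpos x), Real.exp_log hlam, div_div, div_eq_mul_inv]
      simp_rw [hpt]
      rw [integral_mul_const]
      have : (∫ a, Real.exp (A (pcons a x)) * ψ (pcons a x) ∂ν) = l * ψ x := hψeig x
      rw [this, mul_comm l (ψ x)]
      exact div_self (mul_pos (hψpos x) hlam).ne'
    -- `∫ exp (C - B) dμ = 1`
    set φ : (ℕ → M) → ℝ := fun x => Real.exp (C x - B x) with hφdef
    have hφc : Continuous φ := (hCc.sub hBc).rexp
    have hRφ : ∀ x, Ruelle ν B φ x = 1 := by
      intro x
      have hpt : ∀ a : M, Real.exp (B (pcons a x)) * φ (pcons a x) =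
          Real.exp (C (pcons a x)) := by
        intro a
        simp only [hφdef]
        rw [← Real.exp_add]
        congr 1
        ring
      unfold Ruelle
      simp_rw [hpt]
      exact step1 x
    have hφint : ∫ x, φ x ∂μ = 1 := by
      rw [← hfix φ hφc]
      simp_rw [hRφ]
      simp
    -- Jensen-type estimate via `t ≤ e^t - 1`
    have hCB : ∫ x, (C x - B x) ∂μ ≤ 0 := by
      have hmono : ∀ x, C x - B x ≤ φ x - 1 := by
        intro x
        have := Real.add_one_le_exp (C x - B x)
        simp only [hφdef]
        linarith
      calc ∫ x, (C x - B x) ∂μ ≤ ∫ x, (φ x - 1) ∂μ :=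
            integral_mono (hint _ (hCc.sub hBc)) (hint _ (hφc.sub continuous_const)) hmono
        _ = 0 := by
            rw [integral_sub (hint _ hφc) (integrable_const 1), hφint]
            simp
    -- `∫ C dμ = ∫ A dμ - log l`
    have hshift : ∫ x, Real.log (ψ (shiftMap x)) ∂μ = ∫ x, Real.log (ψ x) ∂μ := by
      conv_rhs => rw [← hinv]
      rw [integral_map continuous_shiftMap.measurable.aemeasurable
        hlogψc.aestronglyMeasurable]
    have hc1 : Continuous fun x : ℕ → M => Real.log (ψ (shiftMap x)) :=
      hlogψc.comp continuous_shiftMap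
    have hc2 : Continuous fun x : ℕ → M => A x + Real.log (ψ x) :=
      hAc.add hlogψc
    have hc3 : Continuous fun x : ℕ → M =>
        A x + Real.log (ψ x) - Real.log (ψ (shiftMap x)) := hc2.sub hc1
    have hCint : ∫ x, C x ∂μ = (∫ x, A x ∂μ) - Real.log l := by
      simp only [hCdef]
      rw [integral_sub (hint _ hc3) (integrable_const _),
        integral_sub (hint _ hc2) (hint _ hc1),
        integral_add (hint _ hAc) (hint _ hlogψc), integral_const, hshift]
      simp
    have hsplit : ∫ x, (C x - B x) ∂μ = (∫ x, C x ∂μ) - ∫ x, B x ∂μ :=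
      integral_sub (hint _ hCc) (hint _ hBc)
    rw [hsplit, hCint] at hCB
    linarith
  refine ⟨key, hlogB, ?_, ?_⟩
  · rintro r ⟨A, hA, rfl⟩
    exact key A hA
  · intro l hl
    exact hl ⟨B, hB, by rw [hlogB, add_zero]⟩
end
end

section
/- The entropy function μ ↦ h(μ) = inf_{A Hölder}{−∫A dμ + log λ_A} is upper semi-continuous on the set of shift-invariant probability measures with the weak* topology. -/
open MeasureTheory Filter Topology

noncomputable section

/-- The entropy of an invariant measure: `h(μ) = inf_{A Hölder} { −∫ A dμ + log λ_A }`,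
as an extended real number (it can be `−∞`). Here `lam A` denotes the maximal
eigenvalue of the Ruelle operator `L_A`. -/
def entropy {M : Type*} [MetricSpace M] [MeasurableSpace M]
    (α : ℝ) (lam : ((ℕ → M) → ℝ) → ℝ) (μ : Measure (ℕ → M)) : EReal :=
  ⨅ (A : (ℕ → M) → ℝ) (_ : HolderF α A),
    (((-∫ x, A x ∂μ) + Real.log (lam A) : ℝ) : EReal)

/-- the entropy is upper semi-continuous on the set of
shift-invariant probability measures with the weak* topology. -/
theorem entropy_upper_semicontinuous {M : Type*} [MetricSpace M] [CompactSpace M]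
    [Nonempty M] [MeasurableSpace M] [BorelSpace M]
    (ν : Measure M) [IsProbabilityMeasure ν]
    (hsupp : ∀ U : Set M, IsOpen U → U.Nonempty → 0 < ν U)
    {α : ℝ} (hα : 0 < α)
    (lam : ((ℕ → M) → ℝ) → ℝ) (psi : ((ℕ → M) → ℝ) → (ℕ → M) → ℝ)
    (heig : ∀ A : (ℕ → M) → ℝ, HolderF α A → 0 < lam A ∧ HolderF α (psi A) ∧
      (∀ x, 0 < psi A x) ∧ ∀ x, Ruelle ν A (psi A) x = lam A * psi A x) :
    UpperSemicontinuousOn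
      (fun μ : ProbabilityMeasure (ℕ → M) => entropy α lam (μ : Measure (ℕ → M)))
      {μ : ProbabilityMeasure (ℕ → M) |
        Measure.map shiftMap (μ : Measure (ℕ → M)) = (μ : Measure (ℕ → M))} := by
  apply upperSemicontinuousOn_biInf
  intro A hA
  have hcont : Continuous fun μ : ProbabilityMeasure (ℕ → M) =>
      ∫ x, A x ∂(μ : Measure (ℕ → M)) :=
    ProbabilityMeasure.continuous_integral_boundedContinuousFunction
      (BoundedContinuousFunction.mkOfCompact ⟨A, hA.choose_spec.2.1⟩)
  exact (continuous_coe_real_ereal.comp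
    ((hcont.neg).add continuous_const)).upperSemicontinuous.upperSemicontinuousOn _
end
end
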